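/- arXiv:1510.04823 — 6 statements merged into one kernel-verified Lean document; each statement's English description precedes it below -/
import Mathlib

section
/- Let P ⊆ ℝ^q be a polyhedron of the form P = A + C where C is a pointed polyhedral convex cone, and suppose P contains a vertex. Then every vertex of P is C-minimal in P. (A point p is C-minimal in P if ỹ ∈ P with p − ỹ ∈ C implies ỹ = p.) -/
open Matrix Pointwise

/-- A vertex of `P = A + C` (a point of `P` which is not the midpoint of two
distinct points of `P`). -/
def IsVertexOf (q : ℕ) (P : Set (Fin q → ℝ)) (p : Fin q → ℝ) : Prop :=
  p ∈ P ∧ ∀ y ∈ P, ∀ z ∈ P, p = midpoint ℝ y z → y = z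

/-- Every vertex of the polyhedron `P = A + C`, where `A` is a polytope and
`C` a pointed polyhedral convex cone, is `C`-minimal in `P`. -/
theorem vertex_is_C_minimal (q : ℕ) (A C P : Set (Fin q → ℝ))
    (hA : ∃ V : Finset (Fin q → ℝ), A = convexHull ℝ (V : Set (Fin q → ℝ)))
    (hCpoly : ∃ (o : ℕ) (Y : Matrix (Fin q) (Fin o) ℝ),
      C = {y | ∃ v : Fin o → ℝ, (∀ i, 0 ≤ v i) ∧ y = Y.mulVec v})
    (hpointed : C ∩ (-C) = {0})
    (hP : P = A + C)
    (hvert : ∃ p, IsVertexOf q P p) :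
    ∀ p, IsVertexOf q P p → ∀ ytil ∈ P, p - ytil ∈ C → ytil = p := by
  obtain ⟨o, Y, hC⟩ := hCpoly
  intro p hp ytil hytil hc
  -- decompose ytil ∈ P = A + C
  rw [hP] at hytil
  obtain ⟨a, ha, c', hc', rfl⟩ := hytil
  obtain ⟨v, hv, hvY⟩ := (hC ▸ hc : p - (a + c') ∈ _)
  obtain ⟨v', hv', hv'Y⟩ := (hC ▸ hc' : c' ∈ _)
  -- the point p + (p - ytil) is in P
  have hz : p + (p - (a + c')) ∈ P := by
    rw [hP]
    refine ⟨a, ha, c' + (2 : ℝ) • (p - (a + c')), ?_, by module⟩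
    rw [hC]
    refine ⟨v' + (2 : ℝ) • v, fun i => by
      have := hv i; have := hv' i
      simp [Pi.add_apply, Pi.smul_apply]; linarith, ?_⟩
    rw [Matrix.mulVec_add, Matrix.mulVec_smul, ← hvY, ← hv'Y]
  have hmid : p = midpoint ℝ (a + c') (p + (p - (a + c'))) := by
    rw [midpoint_eq_smul_add, (by norm_num : (⅟2 : ℝ) = 1/2)]
    module
  have := hp.2 _ (hP ▸ ⟨a, ha, c', hc', rfl⟩) _ hz hmid
  have h2 : (2 : ℝ) • (p - (a + c')) = 0 := by
    have : a + c' = p + (p - (a + c')) := this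
    funext i
    have := congrFun this i
    simp [Pi.add_apply, Pi.sub_apply, Pi.smul_apply] at *
    linarith
  have h0 : p - (a + c') = 0 := by
    funext i
    have := congrFun h2 i
    simp at this
    simpa [Pi.sub_apply] using this
  have := sub_eq_zero.mp h0
  exact this.symm
end

section
/- Let P ⊆ ℝ^q be a line-free polyhedron of the form P = A + C, where C is a pointed polyhedral convex cone, and let ȳ be an extreme direction of P, i.e. there is y ∈ P such that F = {y + tȳ : t ≥ 0} is a one-dimensional face of P. If ȳ ∉ C, then for every t ≥ 0 the point y + tȳ is C-minimal in P; in particular ȳ is a C-minimal direction of P. -/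
open Matrix Pointwise

/-- `F` is a face of the convex set `P`. -/
def IsFaceOf (q : ℕ) (P F : Set (Fin q → ℝ)) : Prop :=
  F ⊆ P ∧ ∀ x ∈ P, ∀ y ∈ P, ∀ t : ℝ, 0 < t → t < 1 →
    t • x + (1 - t) • y ∈ F → x ∈ F ∧ y ∈ F

/-- If `ybar` spans a one-dimensional face (an extreme ray) of the line-free
polyhedron `P = A + C` and `ybar ∉ C`, then `y + tybar` is `C`-minimal in `P`
for every `t ≥ 0`; in particular `ybar` is a `C`-minimal direction of `P`. -/
theorem extreme_direction_minimal (q : ℕ) (A C P : Set (Fin q → ℝ))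
    (hCpoly : ∃ (o : ℕ) (Y : Matrix (Fin q) (Fin o) ℝ),
      C = {y | ∃ v : Fin o → ℝ, (∀ i, 0 ≤ v i) ∧ y = Y.mulVec v})
    (hpointed : C ∩ (-C) = {0})
    (hP : P = A + C)
    (hLineFree : ¬ ∃ (y d : Fin q → ℝ), d ≠ 0 ∧ ∀ t : ℝ, y + t • d ∈ P)
    (y ybar : Fin q → ℝ) (hy : y ∈ P) (hybar : ybar ≠ 0)
    (hface : IsFaceOf q P {z | ∃ t : ℝ, 0 ≤ t ∧ z = y + t • ybar})
    (hnotC : ybar ∉ C) :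
    ∀ t : ℝ, 0 ≤ t → ∀ ytil ∈ P, (y + t • ybar) - ytil ∈ C → ytil = y + t • ybar := by
  obtain ⟨o, Y, hC⟩ := hCpoly
  -- C is closed under nonnegative scaling
  have smulC : ∀ (a : ℝ), 0 ≤ a → ∀ x ∈ C, a • x ∈ C := by
    intro a ha x hx
    rw [hC] at hx ⊢
    obtain ⟨v, hv, rfl⟩ := hx
    exact ⟨a • v, fun i => mul_nonneg ha (hv i), by
      rw [Matrix.mulVec_smul]⟩
  -- P + C ⊆ P
  have Padd : ∀ x ∈ P, ∀ c ∈ C, x + c ∈ P := by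
    intro x hx c hc
    rw [hP] at hx ⊢
    obtain ⟨a, ha, c0, hc0, rfl⟩ := hx
    refine ⟨a, ha, c0 + c, ?_, by module⟩
    rw [hC] at hc0 hc ⊢
    obtain ⟨v, hv, rfl⟩ := hc0
    obtain ⟨w, hw, rfl⟩ := hc
    exact ⟨v + w, fun i => add_nonneg (hv i) (hw i), by
      rw [Matrix.mulVec_add]⟩
  intro t ht ytil hytil hc
  set c : Fin q → ℝ := (y + t • ybar) - ytil with hcdef
  by_cases hc0 : c = 0
  · have : ytil = (y + t • ybar) - c := by rw [hcdef]; module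
    rw [this, hc0]; module
  · exfalso
    have h2c : (2 : ℝ) • c ∈ C := smulC 2 (by norm_num) c hc
    have hy2 : ytil + (2 : ℝ) • c ∈ P := Padd ytil hytil _ h2c
    have hmid : (1/2 : ℝ) • (ytil + (2:ℝ) • c) + (1 - 1/2 : ℝ) • ytil
        ∈ {z | ∃ t : ℝ, 0 ≤ t ∧ z = y + t • ybar} := by
      refine ⟨t, ht, ?_⟩
      have : (1/2 : ℝ) • (ytil + (2:ℝ) • c) + (1 - 1/2 : ℝ) • ytil = ytil + c := by
        module
      rw [this, hcdef]; module
    obtain ⟨hF1, hF2⟩ := hface.2 _ hy2 _ hytil (1/2) (by norm_num) (by norm_num) hmid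
    obtain ⟨s', hs', hE1⟩ := hF1
    obtain ⟨s, hs, hE2⟩ := hF2
    have hcs : c = ((s' - s)/2) • ybar := by
      have h2 : (2:ℝ) • c = (s' - s) • ybar := by
        have := hE1
        rw [hE2] at this
        have h3 : (2:ℝ) • c = (y + s' • ybar) - (y + s • ybar) := by
          rw [← this]; module
        rw [h3]; module
      have := congrArg (fun z => (1/2 : ℝ) • z) h2
      simpa using this.trans (by module)
    rcases lt_trichotomy s s' with hlt | heq | hgt
    · -- ybar ∈ C, contradiction
      apply hnotC
      have : ybar = (2/(s' - s)) • c := by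
        rw [hcs, smul_smul,
          show (2/(s' - s)) * ((s' - s)/2) = 1 by
            have h : s' - s ≠ 0 := by linarith
            field_simp, one_smul]
      rw [this]
      exact smulC _ (div_nonneg (by norm_num) (by linarith)) c hc
    · apply hc0
      rw [hcs, heq]
      simp
    · -- -ybar ∈ C, gives a line in P
      have hneg : -ybar ∈ C := by
        have : -ybar = (2/(s - s')) • c := by
          rw [hcs, smul_smul]
          have hne : s - s' ≠ 0 := by linarith
          rw [show (2/(s - s')) * ((s' - s)/2) = -1 by field_simp; ring]
          module
        rw [this]
        exact smulC _ (div_nonneg (by norm_num) (by linarith)) c hc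
      apply hLineFree
      refine ⟨y, ybar, hybar, fun r => ?_⟩
      rcases le_or_gt 0 r with hr | hr
      · exact hface.1 ⟨r, hr, rfl⟩
      · have : y + r • ybar = y + (-r) • (-ybar) := by module
        rw [this]
        exact Padd y hy _ (smulC (-r) (by linarith) _ hneg)
end

section
/- Let P = A + C with C a convex cone and let F be a face of the convex set P. If y ∈ F, c ∈ C, ỹ ∈ P and ỹ + c = y, then for each λ ∈ (0,1) the point ỹ + (1/(1−λ))·c lies in P and y = λỹ + (1−λ)(ỹ + (1/(1−λ))c), hence both ỹ and ỹ + (1/(1−λ))c lie in F. -/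
open Pointwise

/-- If `y ∈ F` for a face `F` of `P = A + C`, `ytil ∈ P`, `c ∈ C` and
`ytil + c = y`, then for every `λ ∈ (0,1)` the point `ytil + (1/(1-λ)) • c` lies
in `P`, `y` is the corresponding convex combination, and both `ytil` and
`ytil + (1/(1-λ)) • c` lie in `F`. -/
theorem face_absorbs_cone_decomposition (q : ℕ) (A C P F : Set (Fin q → ℝ))
    (hConv : Convex ℝ C)
    (hCone : ∀ t : ℝ, 0 ≤ t → ∀ x ∈ C, t • x ∈ C)
    (hP : P = A + C)
    (hF : IsFaceOf q P F)
    (y ytil c : Fin q → ℝ) (hyF : y ∈ F) (hytil : ytil ∈ P) (hc : c ∈ C)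
    (hsum : ytil + c = y) :
    ∀ l : ℝ, 0 < l → l < 1 →
      (ytil + (1 / (1 - l)) • c ∈ P ∧
       y = l • ytil + (1 - l) • (ytil + (1 / (1 - l)) • c) ∧
       ytil ∈ F ∧ ytil + (1 / (1 - l)) • c ∈ F) := by
  intro l hl0 hl1
  have h1l : (0:ℝ) < 1 - l := by linarith
  -- C is closed under addition
  have hadd : ∀ x ∈ C, ∀ y' ∈ C, x + y' ∈ C := by
    intro x hx y' hy'
    have := hConv hx hy' (by norm_num : (0:ℝ) ≤ 1/2) (by norm_num : (0:ℝ) ≤ 1/2) (by norm_num)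
    have h2 := hCone 2 (by norm_num) _ this
    have : (2:ℝ) • ((1/2:ℝ) • x + (1/2:ℝ) • y') = x + y' := by
      rw [smul_add, smul_smul, smul_smul]; norm_num
    rwa [this] at h2
  have hzP : ytil + (1 / (1 - l)) • c ∈ P := by
    rw [hP] at hytil ⊢
    obtain ⟨a, ha, c', hc', rfl⟩ := hytil
    have hcs : c' + (1 / (1 - l)) • c ∈ C :=
      hadd c' hc' _ (hCone _ (by positivity) c hc)
    exact ⟨a, ha, c' + (1 / (1 - l)) • c, hcs, (add_assoc a c' ((1 / (1 - l)) • c)).symm⟩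
  have hcomb : y = l • ytil + (1 - l) • (ytil + (1 / (1 - l)) • c) := by
    rw [← hsum, smul_add, smul_smul]
    rw [mul_one_div, div_self (ne_of_gt h1l)]
    module
  refine ⟨hzP, hcomb, ?_⟩
  have := hF.2 ytil hytil _ hzP l hl0 hl1 (hcomb ▸ hyF)
  exact this
end

section
/- Let S ⊆ ℝ^n be a polyhedron, P ∈ ℝ^{q×n}, and C ⊆ ℝ^q a pointed polyhedral convex cone, with upper image 𝒫 := P[S] + C. If 𝒫 has a vertex, then the set of C-minimal points of 𝒫 equals the set of C-minimal points of P[S]: Min_C 𝒫 = Min_C P[S]. -/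
open Matrix Pointwise

/-- If the upper image `Pup = P[S] + C` has a vertex, then the `C`-minimal
points of `Pup` coincide with the `C`-minimal points of the image `P[S]`. -/
theorem minC_upperImage_eq_minC_image (q n : ℕ) (P : Matrix (Fin q) (Fin n) ℝ)
    (S : Set (Fin n → ℝ))
    (hSpoly : ∃ (m : ℕ) (B : Matrix (Fin m) (Fin n) ℝ) (b : Fin m → ℝ),
      S = {x | ∀ i, b i ≤ B.mulVec x i})
    (C : Set (Fin q → ℝ))
    (hCpoly : ∃ (o : ℕ) (Y : Matrix (Fin q) (Fin o) ℝ),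
      C = {y | ∃ v : Fin o → ℝ, (∀ i, 0 ≤ v i) ∧ y = Y.mulVec v})
    (hpointed : C ∩ (-C) = {0})
    (Pup : Set (Fin q → ℝ)) (hPup : Pup = (P.mulVec '' S) + C)
    (hvert : ∃ p, IsVertexOf q Pup p) :
    {y ∈ Pup | ∀ ytil ∈ Pup, y - ytil ∈ C → ytil = y} =
      {y ∈ P.mulVec '' S | ∀ ytil ∈ P.mulVec '' S, y - ytil ∈ C → ytil = y} := by
  obtain ⟨o, Y, hC⟩ := hCpoly
  have hC0 : (0 : Fin q → ℝ) ∈ C := by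
    rw [hC]
    exact ⟨0, fun i => le_refl 0, by simp⟩
  have hCadd : ∀ a ∈ C, ∀ b ∈ C, a + b ∈ C := by
    intro a ha b hb
    rw [hC] at ha hb ⊢
    obtain ⟨v, hv, rfl⟩ := ha
    obtain ⟨w, hw, rfl⟩ := hb
    exact ⟨v + w, fun i => add_nonneg (hv i) (hw i), by rw [Matrix.mulVec_add]⟩
  have hpt : ∀ c ∈ C, -c ∈ C → c = 0 := by
    intro c hc hnc
    have : c ∈ C ∩ (-C) := ⟨hc, by simpa using hnc⟩
    rw [hpointed] at this
    exact this
  have hsub : P.mulVec '' S ⊆ Pup := by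
    intro a ha
    rw [hPup]
    exact ⟨a, ha, 0, hC0, by simp⟩
  ext y
  simp only [Set.mem_setOf_eq]
  constructor
  · rintro ⟨hy, hmin⟩
    rw [hPup] at hy
    obtain ⟨a, ha, c, hc, rfl⟩ := hy
    have hmin' : ∀ ytil ∈ Pup, a + c - ytil ∈ C → ytil = a + c := hmin
    have haPup : a ∈ Pup := hsub ha
    have hac : a + c - a ∈ C := by simpa using hc
    have : a = a + c := hmin' a haPup hac
    show a + c ∈ P.mulVec '' S ∧
      ∀ ytil ∈ P.mulVec '' S, a + c - ytil ∈ C → ytil = a + c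
    rw [← this]
    exact ⟨ha, fun yt hyt hd => (hmin' yt (hsub hyt) (by rw [← this]; exact hd)).trans this.symm⟩
  · rintro ⟨hy, hmin⟩
    refine ⟨hsub hy, ?_⟩
    intro yt hyt hd
    rw [hPup] at hyt
    obtain ⟨a, ha, c, hc, rfl⟩ := hyt
    have hya : y - a ∈ C := by
      have := hCadd _ hd _ hc
      simpa [sub_add_eq_add_sub, sub_add, add_sub_cancel_right] using this
    have hay : a = y := hmin a ha hya
    subst hay
    have hc0 : c = 0 := by
      apply hpt c hc
      have : a - (a + c) ∈ C := hd
      simpa [sub_add_eq_sub_sub] using this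
    simp [hc0]
end

section
/- Let C ⊆ ℝ^q be a pointed polyhedral convex cone and P = A + C a polyhedron containing a vertex. Then an extreme direction of P is a C-minimal direction of P if and only if it does not belong to C. -/
open Matrix Pointwise

/-- `d` is an extreme direction of `P`: some ray `{y + t d : t ≥ 0}` is a
(one-dimensional) face of `P`. -/
def IsExtremeDirOf (q : ℕ) (P : Set (Fin q → ℝ)) (d : Fin q → ℝ) : Prop :=
  d ≠ 0 ∧ ∃ y ∈ P, IsFaceOf q P {z | ∃ t : ℝ, 0 ≤ t ∧ z = y + t • d}

/-!
If `d ∈ C`, then `(y + d) - y = d ∈ C` with `y ≠ y + d`, so no ray in direction `d`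
is `C`-minimal. Conversely, let `R = {y + t d : t ≥ 0}` be a face of `P` and `d ∉ C`. If `p ∈ R`
and `ỹ ∈ P` with `c = p - ỹ ∈ C`, then `p ± c ∈ P` because `P + C ⊆ P`, and `p` is their
midpoint, so `ỹ ∈ R` and `c = r d`. Now `r > 0` would give `d ∈ C`, and `r < 0` would give
`-d ∈ C`, whence `y - d ∈ P` and `y` would be the midpoint of `y ± d`, forcing `y - d ∈ R`,
which is absurd. Hence `c = 0`.
-/

section ConeMinimality

variable {𝕜 E : Type*} [Field 𝕜] [LinearOrder 𝕜] [AddCommGroup E] [Module 𝕜 E]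

variable (𝕜) in
def halfLine (y d : E) : Set E := {z | ∃ t : 𝕜, 0 ≤ t ∧ z = y + t • d}

def IsConeMinimal (C P : Set E) (p : E) : Prop := ∀ y' ∈ P, p - y' ∈ C → y' = p

variable (𝕜) in
def IsConeMinimalDir (C P : Set E) (d : E) : Prop :=
  ∃ y ∈ P, ∀ μ : 𝕜, 0 ≤ μ → IsConeMinimal C P (y + μ • d)

variable {K : ConvexCone 𝕜 E} {P F : Set E} {y d p c : E}

theorem exists_eq_smul_of_mem_halfLine (hp : p ∈ halfLine 𝕜 y d)
    (hpc : p - c ∈ halfLine 𝕜 y d) : ∃ r : 𝕜, c = r • d := by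
  obtain ⟨μ, -, rfl⟩ := hp
  obtain ⟨s, -, hs⟩ := hpc
  exact ⟨μ - s, by linear_combination (norm := module) -hs⟩

theorem notMem_of_isConeMinimal_add {C : Set E} (hy : y ∈ P)
    (hmin : IsConeMinimal C P (y + d)) (hd : d ≠ 0) : d ∉ C := by
  intro hdC
  have hyd : y = y + d := hmin y hy (by rwa [add_sub_cancel_left])
  exact hd (by simpa using hyd)

variable [IsStrictOrderedRing 𝕜]

theorem IsExtreme.sub_mem_of_add_mem (hF : IsExtreme 𝕜 P F) (hp : p ∈ F)
    (hsub : p - c ∈ P) (hadd : p + c ∈ P) : p - c ∈ F :=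
  hF.left_mem_of_mem_openSegment hsub hadd hp
    ⟨2⁻¹, 2⁻¹, by norm_num, by norm_num, by norm_num, by module⟩

theorem sub_notMem_halfLine (hd : d ≠ 0) : y - d ∉ halfLine 𝕜 y d := by
  rintro ⟨t, ht, h⟩
  have : (t + 1) • d = 0 := by linear_combination (norm := module) -h
  exact hd ((smul_eq_zero.mp this).resolve_left (by positivity))

theorem ConvexCone.eq_zero_of_smul_mem (hd : d ∉ K) (hnd : -d ∉ K) {r : 𝕜} (hr : r • d ∈ K) :
    r = 0 := by
  rcases lt_trichotomy r 0 with hneg | hzero | hpos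
  · rw [← neg_smul_neg, K.smul_mem_iff (neg_pos.mpr hneg)] at hr
    exact absurd hr hnd
  · exact hzero
  · exact absurd ((K.smul_mem_iff hpos).mp hr) hd

theorem neg_notMem_of_isExtreme_halfLine (hPK : P + (K : Set E) ⊆ P)
    (hF : IsExtreme 𝕜 P (halfLine 𝕜 y d)) (hd : d ≠ 0) : -d ∉ K := by
  intro hnd
  have hy : y ∈ halfLine 𝕜 y d := ⟨0, le_rfl, by simp⟩
  have hyd : y + d ∈ P := hF.subset ⟨1, zero_le_one, by simp⟩
  have hymd : y - d ∈ P := by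
    rw [sub_eq_add_neg]
    exact hPK (Set.add_mem_add (hF.subset hy) hnd)
  exact sub_notMem_halfLine hd (hF.sub_mem_of_add_mem hy hymd hyd)

theorem isConeMinimal_of_isExtreme_halfLine (hPK : P + (K : Set E) ⊆ P)
    (hF : IsExtreme 𝕜 P (halfLine 𝕜 y d)) (hd : d ≠ 0) (hdK : d ∉ K)
    (hp : p ∈ halfLine 𝕜 y d) : IsConeMinimal K P p := by
  intro y' hy' hc
  have hsub : p - (p - y') ∈ P := by rwa [sub_sub_cancel]
  have hadd : p + (p - y') ∈ P := hPK (Set.add_mem_add (hF.subset hp) hc)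
  obtain ⟨r, hr⟩ := exists_eq_smul_of_mem_halfLine hp (hF.sub_mem_of_add_mem hp hsub hadd)
  have hr0 : r = 0 :=
    K.eq_zero_of_smul_mem hdK (neg_notMem_of_isExtreme_halfLine hPK hF hd) (hr ▸ hc)
  rw [hr0, zero_smul, sub_eq_zero] at hr
  exact hr.symm

theorem isConeMinimalDir_iff_notMem (hPK : P + (K : Set E) ⊆ P)
    (hF : IsExtreme 𝕜 P (halfLine 𝕜 y d)) (hd : d ≠ 0) :
    IsConeMinimalDir 𝕜 K P d ↔ d ∉ K := by
  constructor
  · rintro ⟨y', hy', hmin⟩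
    exact notMem_of_isConeMinimal_add hy' (by simpa using hmin 1 zero_le_one) hd
  · intro hdK
    exact ⟨y, hF.subset ⟨0, le_rfl, by simp⟩, fun μ hμ ↦
      isConeMinimal_of_isExtreme_halfLine hPK hF hd hdK ⟨μ, hμ, rfl⟩⟩

end ConeMinimality

theorem ConvexCone.coe_add_coe_subset {𝕜 E : Type*} [Semiring 𝕜] [PartialOrder 𝕜]
    [AddCommMonoid E] [SMul 𝕜 E] (K : ConvexCone 𝕜 E) : (K : Set E) + K ⊆ K :=
  Set.add_subset_iff.mpr fun _ hx _ hy ↦ K.add_mem hx hy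

theorem ConvexCone.coe_map_positive_mulVecLin {q o : ℕ} (Y : Matrix (Fin q) (Fin o) ℝ) :
    ((ConvexCone.positive ℝ (Fin o → ℝ)).map Y.mulVecLin : Set (Fin q → ℝ)) =
      {y | ∃ v : Fin o → ℝ, (∀ i, 0 ≤ v i) ∧ y = Y.mulVec v} := by
  ext y
  simp [Pi.le_def, eq_comm]

theorem IsFaceOf.isExtreme {q : ℕ} {P F : Set (Fin q → ℝ)} (hF : IsFaceOf q P F) :
    IsExtreme ℝ P F := by
  refine ⟨hF.1, fun x hx z hz w hw ⟨a, b, ha, hb, hab, hxz⟩ ↦ ?_⟩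
  obtain rfl : b = 1 - a := by linarith
  exact (hF.2 x hx z hz a ha (by linarith) (hxz ▸ hw)).1

theorem extreme_dir_minimal_iff_not_in_cone_general (q : ℕ) (A C P : Set (Fin q → ℝ))
    (hCpoly : ∃ (o : ℕ) (Y : Matrix (Fin q) (Fin o) ℝ),
      C = {y | ∃ v : Fin o → ℝ, (∀ i, 0 ≤ v i) ∧ y = Y.mulVec v})
    (hP : P = A + C)
    (d : Fin q → ℝ) (hd : IsExtremeDirOf q P d) :
    (∃ y ∈ P, ∀ μ : ℝ, 0 ≤ μ →
        ∀ ytil ∈ P, (y + μ • d) - ytil ∈ C → ytil = y + μ • d) ↔ d ∉ C := by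
  obtain ⟨o, Y, rfl⟩ := hCpoly
  rw [← ConvexCone.coe_map_positive_mulVecLin] at hP ⊢
  set K := (ConvexCone.positive ℝ (Fin o → ℝ)).map Y.mulVecLin
  obtain ⟨hd0, y, -, hface⟩ := hd
  have hPK : P + (K : Set (Fin q → ℝ)) ⊆ P := by
    rw [hP, add_assoc]
    exact Set.add_subset_add_left (ConvexCone.coe_add_coe_subset _)
  exact isConeMinimalDir_iff_notMem hPK hface.isExtreme hd0

/-- An extreme direction of `P = A + C` (with `C` a pointed polyhedral cone
and `P` having a vertex) is a `C`-minimal direction iff it does not lie in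
`C`. -/
theorem extreme_dir_minimal_iff_not_in_cone (q : ℕ) (A C P : Set (Fin q → ℝ))
    (hCpoly : ∃ (o : ℕ) (Y : Matrix (Fin q) (Fin o) ℝ),
      C = {y | ∃ v : Fin o → ℝ, (∀ i, 0 ≤ v i) ∧ y = Y.mulVec v})
    (hpointed : C ∩ (-C) = {0})
    (hP : P = A + C)
    (hvert : ∃ p, IsVertexOf q P p)
    (d : Fin q → ℝ) (hd : IsExtremeDirOf q P d) :
    (∃ y ∈ P, ∀ μ : ℝ, 0 ≤ μ →
        ∀ ytil ∈ P, (y + μ • d) - ytil ∈ C → ytil = y + μ • d) ↔ d ∉ C :=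
  extreme_dir_minimal_iff_not_in_cone_general q A C P hCpoly hP d hd
end

section
/- Let P ⊆ ℝ^q be a polyhedron with a vertex (i.e. containing no lines). Then an irredundant V-representation of P consists exactly of the set of all vertices of P together with the set of all extreme directions of P; i.e. P = conv(V) + cone(D) where V is the vertex set and D a set of representatives of the extreme rays, and no proper subset of V ∪ D generates P in this way. -/
open Matrix Pointwise

/-- The conical hull (set of nonnegative combinations) of a set. -/
def conicalHull (q : ℕ) (X : Set (Fin q → ℝ)) : Set (Fin q → ℝ) :=
  {y | ∃ (k : ℕ) (t : Fin k → ℝ) (f : Fin k → (Fin q → ℝ)),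
    (∀ i, 0 ≤ t i) ∧ (∀ i, f i ∈ X) ∧ y = ∑ i, t i • f i}

/-! Write `P = {x | b ≤ M x}`; a vertex makes `M` injective. For `x ∈ P`, the directions keeping
every tight constraint tight form a subspace `activeKer M b x`. Moving `x` along such a direction
until a new constraint becomes tight strictly shrinks this subspace, so well-founded induction on it
shows that `x` is a vertex, or lies strictly between two points of smaller active kernel, or is such
a point plus a recession direction. The same induction inside the recession cone `{d | 0 ≤ M d}`
writes each recession direction as a nonnegative combination of directions `d` whose active kernel
is `ℝ d`, and each of these spans a ray face of `P`: take a point of the minimal face of the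
constraints that are constant along `d`; the ray starts where the line through it in direction `d`
enters `P`.

Irredundancy: a vertex is an extreme point of `P`, hence not in the convex hull of the other
vertices. If the generator of a ray face is dropped, the face property shows that no remaining
generator contributes to a point of the ray, so the whole unbounded ray would lie in the convex hull
of the finitely many vertices. -/

lemma conicalHull_eq_hull {q : ℕ} (X : Set (Fin q → ℝ)) :
    conicalHull q X = PointedCone.hull ℝ X := by
  ext y
  constructor
  · rintro ⟨k, t, f, ht, hf, rfl⟩
    exact sum_mem fun i _ => PointedCone.smul_mem _ (ht i) (PointedCone.subset_hull (hf i))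
  · intro hy
    obtain ⟨k, c, g, rfl⟩ := Submodule.mem_span_set'.1 hy
    exact ⟨k, fun i => c i, fun i => g i, fun i => (c i).2, fun i => (g i).2, rfl⟩

lemma mem_openSegment_add_smul_add_smul_neg {E : Type*} [AddCommGroup E] [Module ℝ E]
    (x e : E) {s t : ℝ} (hs : 0 < s) (ht : 0 < t) :
    x ∈ openSegment ℝ (x + s • e) (x + t • -e) := by
  refine ⟨t / (s + t), s / (s + t), by positivity, by positivity,
    by rw [← add_div, add_comm t, div_self (by positivity)], ?_⟩
  match_scalars <;> field_simp <;> ring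

lemma IsVertexOf.mem_extremePoints {q : ℕ} {P : Set (Fin q → ℝ)} {p : Fin q → ℝ}
    (hP : Convex ℝ P) (hp : IsVertexOf q P p) : p ∈ P.extremePoints ℝ := by
  refine _root_.mem_extremePoints.2
    ⟨hp.1, fun x₁ hx₁ x₂ hx₂ ⟨a, c, ha, hc, hac, hpac⟩ => ?_⟩
  set s := min a c
  have hs : 0 < s := lt_min ha hc
  set u := s • (x₁ - x₂)
  have hplus : p + u ∈ P := by
    convert hP hx₁ hx₂ (by linarith [min_le_left a c]) (by linarith [min_le_right a c])
      (show (a + s) + (c - s) = 1 by linarith) using 1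
    rw [← hpac]; module
  have hminus : p - u ∈ P := by
    convert hP hx₁ hx₂ (by linarith [min_le_left a c]) (by linarith [min_le_right a c])
      (show (a - s) + (c + s) = 1 by linarith) using 1
    rw [← hpac]; module
  have hu : u = 0 := by
    have := hp.2 _ hplus _ hminus (by rw [midpoint_add_sub])
    rwa [sub_eq_add_neg, add_right_inj, self_eq_neg] at this
  obtain rfl : x₁ = x₂ := sub_eq_zero.1 ((smul_eq_zero.1 hu).resolve_left hs.ne')
  rw [← add_smul, hac, one_smul] at hpac
  exact ⟨hpac, hpac⟩

namespace Polyhedral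

variable {ι : Type*} {q : ℕ}

def polyhedron (M : Matrix ι (Fin q) ℝ) (b : ι → ℝ) : Set (Fin q → ℝ) :=
  {x | ∀ i, b i ≤ (M *ᵥ x) i}

def recessionCone (M : Matrix ι (Fin q) ℝ) : PointedCone ℝ (Fin q → ℝ) :=
  (PointedCone.positive ℝ (ι → ℝ)).comap M.mulVecLin

def activeKer (M : Matrix ι (Fin q) ℝ) (b : ι → ℝ) (x : Fin q → ℝ) :
    Submodule ℝ (Fin q → ℝ) where
  carrier := {e | ∀ i, (M *ᵥ x) i = b i → (M *ᵥ e) i = 0}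
  add_mem' ha hc i hi := by simp [mulVec_add, ha i hi, hc i hi]
  zero_mem' _ _ := by simp
  smul_mem' c e he i hi := by simp [mulVec_smul, he i hi]

def ray (y d : Fin q → ℝ) : Set (Fin q → ℝ) :=
  {z | ∃ t : ℝ, 0 ≤ t ∧ z = y + t • d}

variable {M : Matrix ι (Fin q) ℝ} {b : ι → ℝ} {x y d e : Fin q → ℝ}

lemma mem_recessionCone : d ∈ recessionCone M ↔ ∀ i, 0 ≤ (M *ᵥ d) i := Iff.rfl

lemma mulVec_add_smul_apply (M : Matrix ι (Fin q) ℝ) (x e : Fin q → ℝ) (t : ℝ) (i : ι) :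
    (M *ᵥ (x + t • e)) i = (M *ᵥ x) i + t * (M *ᵥ e) i := by
  simp [mulVec_add, mulVec_smul]

lemma convex_polyhedron : Convex ℝ (polyhedron M b) :=
  (convex_Ici b).linear_preimage M.mulVecLin

lemma add_mem_polyhedron (hx : x ∈ polyhedron M b) (hd : d ∈ recessionCone M) :
    x + d ∈ polyhedron M b := fun i => by
  simpa [mulVec_add] using add_le_add (hx i) (hd i)

lemma mulVec_eq_zero_of_mem_recessionCone (hd : d ∈ recessionCone M)
    (hnd : -d ∈ recessionCone M) : M *ᵥ d = 0 :=
  funext fun i => le_antisymm (by simpa [mulVec_neg] using hnd i) (hd i)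

lemma neg_notMem_recessionCone (hM : ∀ e, M *ᵥ e = 0 → e = 0) (hd : d ∈ recessionCone M)
    (hd0 : d ≠ 0) : -d ∉ recessionCone M :=
  fun hnd => hd0 (hM d (mulVec_eq_zero_of_mem_recessionCone hd hnd))

lemma mem_recessionCone_of_ray_subset (h : ray y d ⊆ polyhedron M b) : d ∈ recessionCone M := by
  intro i
  by_contra! hneg
  replace hneg : (M *ᵥ d) i < 0 := hneg
  set t := ((M *ᵥ y) i - b i + 1) / -(M *ᵥ d) i
  have hy : b i ≤ (M *ᵥ y) i := by simpa using h ⟨0, le_rfl, by simp⟩ i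
  have hyt := h ⟨t, div_nonneg (by linarith) (by linarith), rfl⟩ i
  have ht : t * -(M *ᵥ d) i = (M *ᵥ y) i - b i + 1 := div_mul_cancel₀ _ (by linarith)
  rw [mulVec_add_smul_apply] at hyt
  linarith [mul_neg t ((M *ᵥ d) i)]

lemma IsExtremeDirOf.mem_recessionCone (hd : IsExtremeDirOf q (polyhedron M b) d) :
    d ∈ recessionCone M :=
  let ⟨_, _, _, hF⟩ := hd
  mem_recessionCone_of_ray_subset hF.1

lemma exists_add_smul_mem_tight [Fintype ι] (hx : x ∈ polyhedron M b)
    (he : e ∉ recessionCone M) :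
    ∃ t : ℝ, 0 ≤ t ∧ x + t • e ∈ polyhedron M b ∧
      ∃ i, (M *ᵥ e) i < 0 ∧ (M *ᵥ (x + t • e)) i = b i := by
  classical
  simp only [mem_recessionCone, not_forall, not_le] at he
  set S := Finset.univ.filter fun i => (M *ᵥ e) i < 0
  obtain ⟨i₀, hi₀S, hmin⟩ :=
    S.exists_min_image (fun i => ((M *ᵥ x) i - b i) / -(M *ᵥ e) i)
      (by obtain ⟨i, hi⟩ := he; exact ⟨i, by simpa [S] using hi⟩)
  have hi₀ : (M *ᵥ e) i₀ < 0 := (Finset.mem_filter.1 hi₀S).2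
  set t := ((M *ᵥ x) i₀ - b i₀) / -(M *ᵥ e) i₀
  have htight : t * -(M *ᵥ e) i₀ = (M *ᵥ x) i₀ - b i₀ := div_mul_cancel₀ _ (by linarith)
  have ht : 0 ≤ t := div_nonneg (sub_nonneg.2 (hx i₀)) (by linarith)
  refine ⟨t, ht, fun i => ?_, i₀, hi₀, by rw [mulVec_add_smul_apply]; linarith⟩
  rw [mulVec_add_smul_apply]
  by_cases hi : (M *ᵥ e) i < 0
  · have := (le_div_iff₀ (neg_pos.2 hi)).1 (hmin i (by simpa [S] using hi))
    linarith
  · nlinarith [hx i]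

lemma activeKer_add_smul_le (he : e ∈ activeKer M b x) (t : ℝ) :
    activeKer M b (x + t • e) ≤ activeKer M b x :=
  fun f hf i hi => hf i (by simp [mulVec_add_smul_apply, he i hi, hi])

lemma exists_pos_add_smul_mem_activeKer_lt [Fintype ι] (hx : x ∈ polyhedron M b)
    (he : e ∈ activeKer M b x) (hrec : e ∉ recessionCone M) :
    ∃ t : ℝ, 0 < t ∧ x + t • e ∈ polyhedron M b ∧
      activeKer M b (x + t • e) < activeKer M b x := by
  obtain ⟨t, ht, hxt, i, hi, htight⟩ := exists_add_smul_mem_tight hx hrec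
  have hxi : (M *ᵥ x) i ≠ b i := fun h => hi.ne (he i h)
  refine ⟨t, ht.lt_of_ne ?_, hxt, SetLike.lt_iff_le_and_exists.2
    ⟨activeKer_add_smul_le he t, e, he, fun h => hi.ne (h i htight)⟩⟩
  rintro rfl
  exact hxi (by simpa using htight)

lemma exists_pos_add_smul_mem [Fintype ι] (hx : x ∈ polyhedron M b)
    (he : e ∈ activeKer M b x) : ∃ t : ℝ, 0 < t ∧ x + t • e ∈ polyhedron M b := by
  by_cases hrec : e ∈ recessionCone M
  · exact ⟨1, one_pos, by simpa using add_mem_polyhedron hx hrec⟩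
  · obtain ⟨t, ht, hxt, -⟩ := exists_pos_add_smul_mem_activeKer_lt hx he hrec
    exact ⟨t, ht, hxt⟩

theorem activeKer_induction {C : (Fin q → ℝ) → Prop}
    (h : ∀ x ∈ polyhedron M b,
      (∀ y ∈ polyhedron M b, activeKer M b y < activeKer M b x → C y) → C x) :
    ∀ x ∈ polyhedron M b, C x := fun x =>
  (InvImage.wf (activeKer M b) wellFounded_lt).induction
    (C := fun x => x ∈ polyhedron M b → C x) x
    fun x ih hx => h x hx fun y hy hlt => ih y hlt hy

lemma isVertexOf_of_activeKer_eq_bot (hx : x ∈ polyhedron M b) (h : activeKer M b x = ⊥) :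
    IsVertexOf q (polyhedron M b) x := by
  refine ⟨hx, fun y hy z hz hmid => ?_⟩
  have hyz : y - z ∈ activeKer M b x := fun i hi => by
    have hxi : (M *ᵥ x) i = ((M *ᵥ y) i + (M *ᵥ z) i) / 2 := by
      rw [hmid, midpoint_eq_smul_add, invOf_eq_inv]
      simp only [mulVec_smul, mulVec_add, Pi.smul_apply, Pi.add_apply, smul_eq_mul]
      ring
    have := hy i
    have := hz i
    simp only [mulVec_sub, Pi.sub_apply]
    linarith
  simpa [h, sub_eq_zero] using hyz

lemma activeKer_eq_bot_of_isVertexOf [Fintype ι] (hx : IsVertexOf q (polyhedron M b) x) :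
    activeKer M b x = ⊥ := by
  refine (Submodule.eq_bot_iff _).2 fun e he => ?_
  obtain ⟨s, hs, hxs⟩ := exists_pos_add_smul_mem hx.1 he
  obtain ⟨t, ht, hxt⟩ := exists_pos_add_smul_mem hx.1 (neg_mem he)
  have := (hx.mem_extremePoints convex_polyhedron).2 hxs hxt
    (mem_openSegment_add_smul_add_smul_neg x e hs ht)
  simpa [hs.ne'] using this

lemma IsVertexOf.eq_zero_of_mulVec_eq_zero [Fintype ι] (hx : IsVertexOf q (polyhedron M b) x)
    (he : M *ᵥ e = 0) : e = 0 := by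
  have : e ∈ activeKer M b x := fun i _ => by simp [he]
  simpa [activeKer_eq_bot_of_isVertexOf hx] using this

lemma finite_setOf_isVertexOf [Fintype ι] : {p | IsVertexOf q (polyhedron M b) p}.Finite := by
  refine Set.Finite.of_finite_image (f := fun p => {i | (M *ᵥ p) i = b i}) (Set.toFinite _) ?_
  intro p hp p' hp' h
  have hpp' : p - p' ∈ activeKer M b p := fun i hi => by
    have hi' : (M *ᵥ p') i = b i := (Set.ext_iff.1 h i).1 hi
    simp [mulVec_sub, hi, hi']
  simpa [activeKer_eq_bot_of_isVertexOf hp, sub_eq_zero] using hpp'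

theorem polyhedron_subset_convexHull_add_recessionCone [Fintype ι]
    (hM : ∀ e, M *ᵥ e = 0 → e = 0) :
    polyhedron M b ⊆ convexHull ℝ {p | IsVertexOf q (polyhedron M b) p} +
      (recessionCone M : Set (Fin q → ℝ)) := by
  set S := convexHull ℝ {p | IsVertexOf q (polyhedron M b) p} +
    (recessionCone M : Set (Fin q → ℝ))
  have hS : Convex ℝ S := (convex_convexHull ℝ _).add (recessionCone M).convex
  have hSadd : ∀ x ∈ S, ∀ d ∈ recessionCone M, x + d ∈ S := by
    rintro _ ⟨c, hc, r, hr, rfl⟩ d hd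
    exact ⟨c, hc, r + d, add_mem hr hd, (add_assoc c r d).symm⟩
  refine activeKer_induction fun x hx ih => ?_
  by_cases hbot : activeKer M b x = ⊥
  · exact ⟨x, subset_convexHull ℝ _ (isVertexOf_of_activeKer_eq_bot hx hbot), 0, zero_mem _,
      add_zero x⟩
  obtain ⟨e, he, hrec⟩ : ∃ e ∈ activeKer M b x, e ∉ recessionCone M := by
    obtain ⟨e, he, he0⟩ := Submodule.exists_mem_ne_zero_of_ne_bot hbot
    by_cases h : e ∈ recessionCone M
    · exact ⟨-e, neg_mem he, neg_notMem_recessionCone hM h he0⟩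
    · exact ⟨e, he, h⟩
  obtain ⟨s, hs, hxs, hlts⟩ := exists_pos_add_smul_mem_activeKer_lt hx he hrec
  by_cases hrec' : -e ∈ recessionCone M
  · simpa using hSadd _ (ih _ hxs hlts) _ (PointedCone.smul_mem _ hs.le hrec')
  · obtain ⟨t, ht, hxt, hltt⟩ := exists_pos_add_smul_mem_activeKer_lt hx (neg_mem he) hrec'
    exact hS.openSegment_subset (ih _ hxs hlts) (ih _ hxt hltt)
      (mem_openSegment_add_smul_add_smul_neg x e hs ht)

lemma exists_add_smul_mem_polyhedron [Fintype ι] (hd : d ∈ recessionCone M)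
    (hx : ∀ i, (M *ᵥ d) i = 0 → b i ≤ (M *ᵥ x) i) :
    ∃ T : ℝ, x + T • d ∈ polyhedron M b := by
  have : ∀ᶠ T : ℝ in Filter.atTop, ∀ i, b i ≤ (M *ᵥ (x + T • d)) i := by
    refine Filter.eventually_all.2 fun i => ?_
    simp only [mulVec_add_smul_apply]
    rcases (mem_recessionCone.1 hd i).eq_or_lt with h | h
    · exact Filter.Eventually.of_forall fun T => by simp [← h, hx i h.symm]
    · exact (Filter.tendsto_atTop_add_const_left _ _
        (Filter.tendsto_id.atTop_mul_const h)).eventually_ge_atTop (b i)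
  exact this.exists

/-- `x + c • d` is the point where the line `x + ℝ d` enters the polyhedron. -/
lemma exists_add_smul_mem_polyhedron_tight [Fintype ι] (hd : d ∈ recessionCone M)
    (hnd : -d ∉ recessionCone M) (hx : ∀ i, (M *ᵥ d) i = 0 → b i ≤ (M *ᵥ x) i) :
    ∃ c : ℝ, x + c • d ∈ polyhedron M b ∧
      ∃ k, 0 < (M *ᵥ d) k ∧ (M *ᵥ (x + c • d)) k = b k := by
  obtain ⟨T, hT⟩ := exists_add_smul_mem_polyhedron hd hx
  obtain ⟨t, -, hmem, k, hk, htight⟩ := exists_add_smul_mem_tight hT hnd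
  have hxc : x + T • d + t • -d = x + (T - t) • d := by module
  rw [hxc] at hmem htight
  exact ⟨T - t, hmem, k, by simpa [mulVec_neg] using hk, htight⟩

lemma exists_activeKer_le_ker [Fintype ι] (hP : (polyhedron M b).Nonempty) :
    ∃ x ∈ polyhedron M b, ∀ e ∈ activeKer M b x, M *ᵥ e = 0 := by
  obtain ⟨x, hx, hmin⟩ := (InvImage.wf (activeKer M b) wellFounded_lt).has_min _ hP
  have hrec : ∀ e ∈ activeKer M b x, e ∈ recessionCone M := fun e he => by
    by_contra hrec
    obtain ⟨t, -, hxt, hlt⟩ := exists_pos_add_smul_mem_activeKer_lt hx he hrec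
    exact hmin _ hxt hlt
  exact ⟨x, hx, fun e he =>
    mulVec_eq_zero_of_mem_recessionCone (hrec e he) (hrec _ (neg_mem he))⟩

lemma isFaceOf_setOf_tight (T : Set ι) :
    IsFaceOf q (polyhedron M b) {z | z ∈ polyhedron M b ∧ ∀ i ∈ T, (M *ᵥ z) i = b i} := by
  refine ⟨fun z hz => hz.1, fun x hx y hy t ht0 ht1 hxy =>
    ⟨⟨hx, fun i hi => ?_⟩, ⟨hy, fun i hi => ?_⟩⟩⟩ <;>
  · have h := hxy.2 i hi
    simp only [mulVec_add, mulVec_smul, Pi.add_apply, Pi.smul_apply, smul_eq_mul] at h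
    nlinarith [hx i, hy i]

theorem isExtremeDirOf_of_activeKer_le_span [Fintype ι] (hM : ∀ e, M *ᵥ e = 0 → e = 0)
    (hP : (polyhedron M b).Nonempty) (hd : d ∈ recessionCone M) (hd0 : d ≠ 0)
    (hspan : activeKer M 0 d ≤ ℝ ∙ d) : IsExtremeDirOf q (polyhedron M b) d := by
  classical
  set I := {i // (M *ᵥ d) i = 0}
  have hPI : (polyhedron (M.submatrix (Subtype.val : I → ι) id) (fun i => b i)).Nonempty :=
    hP.mono fun z (hz : z ∈ polyhedron M b) i => hz i
  obtain ⟨x, hx, hxker⟩ := exists_activeKer_le_ker hPI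
  obtain ⟨c, hy, k, hk, hky⟩ := exists_add_smul_mem_polyhedron_tight hd
    (neg_notMem_recessionCone hM hd hd0) fun i hi => hx ⟨i, hi⟩
  refine ⟨hd0, x + c • d, hy, ?_⟩
  convert isFaceOf_setOf_tight (M := M) (b := b)
    {i | (M *ᵥ d) i = 0 ∧ (M *ᵥ x) i = b i} using 1
  ext z
  constructor
  · rintro ⟨t, ht, rfl⟩
    refine ⟨add_mem_polyhedron hy (PointedCone.smul_mem _ ht hd), fun i ⟨hdi, hxi⟩ => ?_⟩
    rw [add_assoc, ← add_smul, mulVec_add_smul_apply, hdi, mul_zero, add_zero, hxi]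
  · rintro ⟨hz, hztight⟩
    have hzx : z - x ∈ ℝ ∙ d := hspan fun i hi => by
      have hmem : z - x ∈ activeKer (M.submatrix (Subtype.val : I → ι) id) (fun i => b i) x :=
        fun j hj => by
        replace hj : (M *ᵥ x) j.1 = b j.1 := hj
        change (M *ᵥ (z - x)) j.1 = 0
        simp [mulVec_sub, hztight j ⟨j.2, hj⟩, hj]
      exact congrFun (hxker _ hmem) ⟨i, hi⟩
    obtain ⟨u, hu⟩ := Submodule.mem_span_singleton.1 hzx
    have hz' : z = x + u • d := by rw [hu]; abel
    have hcu : c ≤ u := by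
      have := hz k
      rw [hz', mulVec_add_smul_apply] at this
      rw [mulVec_add_smul_apply] at hky
      exact le_of_mul_le_mul_right (by linarith) hk
    exact ⟨u - c, sub_nonneg.2 hcu, by rw [hz']; module⟩

lemma mem_activeKer_zero_self : d ∈ activeKer M 0 d := fun _ h => h

lemma activeKer_zero_le (he : e ∈ activeKer M 0 d) : activeKer M 0 e ≤ activeKer M 0 d :=
  fun _ hf i hi => hf i (he i hi)

/-- The witness is `e` slid along `d` to the boundary of the recession cone. -/
lemma exists_activeKer_zero_lt [Fintype ι] (hM : ∀ e, M *ᵥ e = 0 → e = 0)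
    (hd : d ∈ recessionCone M) (hd0 : d ≠ 0) (he : e ∈ activeKer M 0 d)
    (hespan : e ∉ ℝ ∙ d) :
    ∃ g ∈ recessionCone M, g ∈ activeKer M 0 d ∧ g ≠ 0 ∧
      activeKer M 0 g < activeKer M 0 d := by
  obtain ⟨c, hg, k, hk, hgk⟩ := exists_add_smul_mem_polyhedron_tight (b := 0) (x := e) hd
    (neg_notMem_recessionCone hM hd hd0) fun i hi => by simp [he i hi]
  have hgd : e + c • d ∈ activeKer M 0 d :=
    add_mem he (Submodule.smul_mem _ c mem_activeKer_zero_self)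
  refine ⟨e + c • d, hg, hgd, fun h => hespan ?_, SetLike.lt_iff_le_and_exists.2
    ⟨activeKer_zero_le hgd, d, mem_activeKer_zero_self, fun h => hk.ne' (h k hgk)⟩⟩
  rw [add_eq_zero_iff_eq_neg.1 h]
  exact neg_mem (Submodule.smul_mem _ c (Submodule.mem_span_singleton_self d))

theorem recessionCone_le_hull [Fintype ι] (hM : ∀ e, M *ᵥ e = 0 → e = 0)
    (hP : (polyhedron M b).Nonempty) {D : Set (Fin q → ℝ)}
    (hD : ∀ d, IsExtremeDirOf q (polyhedron M b) d →
      ∃ d' ∈ D, ∃ t : ℝ, 0 < t ∧ d = t • d') :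
    recessionCone M ≤ PointedCone.hull ℝ D := by
  intro d hd
  refine activeKer_induction (b := 0) (C := (· ∈ PointedCone.hull ℝ D))
    (fun d hd ih => ?_) d hd
  rcases eq_or_ne d 0 with rfl | hd0
  · exact zero_mem _
  by_cases hspan : activeKer M 0 d ≤ ℝ ∙ d
  · obtain ⟨d', hd', t, ht, rfl⟩ :=
      hD d (isExtremeDirOf_of_activeKer_le_span hM hP hd hd0 hspan)
    exact PointedCone.smul_mem _ ht.le (PointedCone.subset_hull hd')
  obtain ⟨e, he, hespan⟩ := SetLike.not_le_iff_exists.1 hspan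
  obtain ⟨g, hg, hgd, hg0, hlt⟩ := exists_activeKer_zero_lt hM hd hd0 he hespan
  obtain ⟨s, hs, hds, hlts⟩ := exists_pos_add_smul_mem_activeKer_lt hd (neg_mem hgd)
    (neg_notMem_recessionCone hM hg hg0)
  have hdg : d = (d + s • -g) + s • g := by module
  rw [hdg]
  exact add_mem (ih _ hds hlts) (PointedCone.smul_mem _ hs.le (ih g hg hlt))

theorem polyhedron_eq_convexHull_add_hull [Fintype ι] (hM : ∀ e, M *ᵥ e = 0 → e = 0)
    (hP : (polyhedron M b).Nonempty) {D : Set (Fin q → ℝ)} (hDrec : D ⊆ recessionCone M)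
    (hD : ∀ d, IsExtremeDirOf q (polyhedron M b) d →
      ∃ d' ∈ D, ∃ t : ℝ, 0 < t ∧ d = t • d') :
    polyhedron M b =
      convexHull ℝ {p | IsVertexOf q (polyhedron M b) p} + (PointedCone.hull ℝ D : Set _) := by
  refine ((polyhedron_subset_convexHull_add_recessionCone hM).trans
    (Set.add_subset_add_left (recessionCone_le_hull hM hP hD))).antisymm ?_
  rintro _ ⟨c, hc, r, hr, rfl⟩
  exact add_mem_polyhedron (convexHull_min (fun p hp => hp.1) convex_polyhedron hc)
    (Submodule.span_le.2 hDrec hr)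

theorem convexHull_sdiff_add_ne_polyhedron {W C : Set (Fin q → ℝ)} {v : Fin q → ℝ}
    (hW : W ⊆ polyhedron M b) (hC : C ⊆ recessionCone M)
    (hv : IsVertexOf q (polyhedron M b) v) :
    convexHull ℝ (W \ {v}) + C ≠ polyhedron M b := by
  intro heq
  have hv' := hv.1
  rw [← heq] at hv'
  obtain ⟨c, hc, r, hr, hcr⟩ := Set.mem_add.1 hv'
  have hcP : c ∈ polyhedron M b :=
    convexHull_min (Set.sdiff_subset.trans hW) convex_polyhedron hc
  have hr0 : r = 0 := by
    have := hv.2 c hcP _ (add_mem_polyhedron hcP (PointedCone.smul_mem _ zero_le_two (hC hr)))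
      (by rw [← hcr, midpoint_eq_smul_add, invOf_eq_inv]; module)
    simpa using this
  have hsdiff := (convex_polyhedron.mem_extremePoints_iff_convex_sdiff.1
    (hv.mem_extremePoints convex_polyhedron)).2
  exact (convexHull_min (Set.sdiff_subset_sdiff_left hW) hsdiff hc).2
    (by rw [← hcr, hr0, add_zero]; rfl)

lemma mem_ray_and_eq_smul_of_add_mem_ray (hM : ∀ e, M *ᵥ e = 0 → e = 0)
    (hF : IsFaceOf q (polyhedron M b) (ray y d)) (hd0 : d ≠ 0) {a r : Fin q → ℝ}
    (ha : a ∈ polyhedron M b) (hr : r ∈ recessionCone M) (har : a + r ∈ ray y d) :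
    a ∈ ray y d ∧ ∃ s : ℝ, 0 ≤ s ∧ r = s • d := by
  have ha2 : a + (2 : ℝ) • r ∈ polyhedron M b :=
    add_mem_polyhedron ha (PointedCone.smul_mem _ zero_le_two hr)
  obtain ⟨⟨t₁, ht₁, hat₁⟩, ⟨t₂, -, hat₂⟩⟩ :=
    hF.2 a ha _ ha2 (1 / 2) (by norm_num) (by norm_num) (by convert har using 1; module)
  have hr2 : r = ((t₂ - t₁) / 2) • d := by
    rw [hat₁] at hat₂
    calc r = (1 / 2 : ℝ) • ((y + t₁ • d + (2 : ℝ) • r) - (y + t₁ • d)) := by module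
      _ = ((t₂ - t₁) / 2) • d := by rw [hat₂]; module
  refine ⟨⟨t₁, ht₁, hat₁⟩, (t₂ - t₁) / 2, ?_, hr2⟩
  by_contra! hneg
  have hne : t₂ - t₁ ≠ 0 := by linarith
  refine neg_notMem_recessionCone hM (mem_recessionCone_of_ray_subset hF.1) hd0 ?_
  have hnd : -d = (-2 / (t₂ - t₁)) • r := by
    rw [hr2, smul_smul, show -2 / (t₂ - t₁) * ((t₂ - t₁) / 2) = -1 by field_simp,
      neg_one_smul]
  rw [hnd]
  exact PointedCone.smul_mem _ (div_nonneg_of_nonpos (by norm_num) (by linarith)) hr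

lemma eq_zero_of_mem_hull_of_eq_smul (hM : ∀ e, M *ᵥ e = 0 → e = 0)
    (hF : IsFaceOf q (polyhedron M b) (ray y d)) (hd0 : d ≠ 0) {X : Set (Fin q → ℝ)}
    (hX : X ⊆ recessionCone M) (hXd : ∀ e ∈ X, ∀ s : ℝ, 0 ≤ s → e ≠ s • d)
    {r : Fin q → ℝ} (hr : r ∈ PointedCone.hull ℝ X) :
    ∀ s : ℝ, 0 ≤ s → r = s • d → r = 0 := by
  have hXrec : PointedCone.hull ℝ X ≤ recessionCone M := Submodule.span_le.2 hX
  have hy : y ∈ polyhedron M b := hF.1 ⟨0, le_rfl, by simp⟩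
  induction hr using Submodule.span_induction with
  | mem e he => exact fun s hs h => absurd h (hXd e he s hs)
  | zero => exact fun _ _ _ => rfl
  | add r₁ r₂ hr₁ hr₂ ih₁ ih₂ =>
    intro s hs h
    obtain ⟨⟨t, ht, h₁⟩, s₂, hs₂, h₂⟩ :=
      mem_ray_and_eq_smul_of_add_mem_ray hM hF hd0 (add_mem_polyhedron hy (hXrec hr₁))
        (hXrec hr₂) ⟨s, hs, by rw [add_assoc, h]⟩
    rw [ih₁ t ht (add_left_cancel h₁), ih₂ s₂ hs₂ h₂, add_zero]
  | smul c r hr ih =>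
    intro s hs h
    obtain ⟨c, hc⟩ := c
    change c • r = s • d at h
    change c • r = 0
    rcases hc.eq_or_lt with rfl | hc
    · exact zero_smul ℝ r
    · have hrd : r = (s / c) • d := by
        rw [div_eq_inv_mul, ← smul_smul, ← h, smul_smul, inv_mul_cancel₀ hc.ne', one_smul]
      rw [ih _ (div_nonneg hs hc.le) hrd, smul_zero]

lemma not_isBounded_ray (y : Fin q → ℝ) (hd : d ≠ 0) : ¬ Bornology.IsBounded (ray y d) := by
  intro h
  obtain ⟨R, hR⟩ := h.exists_norm_le
  set t := (|R| + ‖y‖ + 1) / ‖d‖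
  have htd : ‖t • d‖ = |R| + ‖y‖ + 1 := by
    rw [norm_smul, Real.norm_of_nonneg (by positivity), div_mul_cancel₀ _ (norm_ne_zero_iff.2 hd)]
  have hyt := hR _ ⟨t, by positivity, rfl⟩
  have := norm_sub_le (y + t • d) y
  rw [add_sub_cancel_left, htd] at this
  linarith [le_abs_self R]

theorem convexHull_add_hull_ne_polyhedron (hM : ∀ e, M *ᵥ e = 0 → e = 0)
    {V X : Set (Fin q → ℝ)} (hV : V.Finite) (hd : IsExtremeDirOf q (polyhedron M b) d)
    (hX : X ⊆ recessionCone M) (hXd : ∀ e ∈ X, ∀ s : ℝ, 0 ≤ s → e ≠ s • d) :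
    convexHull ℝ V + (PointedCone.hull ℝ X : Set _) ≠ polyhedron M b := by
  obtain ⟨hd0, y, -, hF⟩ := hd
  intro heq
  refine not_isBounded_ray y hd0 ((hV.isCompact_convexHull ℝ).isBounded.subset fun z hz => ?_)
  obtain ⟨c, hc, r, hr, rfl⟩ := Set.mem_add.1 (heq ▸ hF.1 hz)
  have hcP : c ∈ polyhedron M b := heq ▸ ⟨c, hc, 0, zero_mem _, add_zero c⟩
  obtain ⟨-, s, hs, hrs⟩ :=
    mem_ray_and_eq_smul_of_add_mem_ray hM hF hd0 hcP (Submodule.span_le.2 hX hr) hz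
  rwa [eq_zero_of_mem_hull_of_eq_smul hM hF hd0 hX hXd hr s hs hrs, add_zero]

end Polyhedral

open Polyhedral

theorem irredundant_V_representation_general (q : ℕ) (P : Set (Fin q → ℝ))
    (hPpoly : ∃ (m : ℕ) (M : Matrix (Fin m) (Fin q) ℝ) (b : Fin m → ℝ),
      P = {x | ∀ i, b i ≤ M.mulVec x i})
    (hvert : ∃ p, IsVertexOf q P p)
    (V : Set (Fin q → ℝ)) (hV : V = {p | IsVertexOf q P p})
    (D : Finset (Fin q → ℝ))
    (hD : ∀ d ∈ D, IsExtremeDirOf q P d)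
    (hDrep : ∀ d, IsExtremeDirOf q P d →
      ∃! d' : Fin q → ℝ, d' ∈ D ∧ ∃ t : ℝ, 0 < t ∧ d = t • d') :
    P = convexHull ℝ V + conicalHull q (D : Set (Fin q → ℝ)) ∧
    (∀ v ∈ V,
      convexHull ℝ (V \ {v}) + conicalHull q (D : Set (Fin q → ℝ)) ≠ P) ∧
    (∀ d ∈ D,
      convexHull ℝ V + conicalHull q ((D : Set (Fin q → ℝ)) \ {d}) ≠ P) := by
  obtain ⟨m, M, b, rfl⟩ := hPpoly
  obtain ⟨p, hp⟩ := hvert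
  subst hV
  have hM : ∀ e, M *ᵥ e = 0 → e = 0 := fun e => hp.eq_zero_of_mulVec_eq_zero
  have hDrec : (D : Set (Fin q → ℝ)) ⊆ recessionCone M :=
    fun d hd => (hD d hd).mem_recessionCone
  simp only [conicalHull_eq_hull]
  refine ⟨polyhedron_eq_convexHull_add_hull hM ⟨p, hp.1⟩ hDrec
      fun d hd => (hDrep d hd).exists,
    fun v hv => convexHull_sdiff_add_ne_polyhedron (fun _ h => h.1) (Submodule.span_le.2 hDrec) hv,
    fun d hd => convexHull_add_hull_ne_polyhedron hM finite_setOf_isVertexOf (hD d hd)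
      (Set.sdiff_subset.trans hDrec) ?_⟩
  -- a positive multiple of `d` in `D` represents the same extreme ray as `d`, so it is `d`
  rintro e ⟨he, hed⟩ s hs rfl
  have hs0 : 0 < s := hs.lt_of_ne (by rintro rfl; exact (hD _ he).1 (zero_smul ℝ d))
  obtain ⟨d', -, huniq⟩ := hDrep _ (hD _ he)
  exact hed ((huniq _ ⟨he, 1, one_pos, (one_smul ℝ _).symm⟩).trans
    (huniq d ⟨hd, s, hs0, rfl⟩).symm)

/-- For a nonempty polyhedron `P` with a vertex, the vertices together with
representatives of the extreme rays form an irredundant V-representation: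
`P = conv V + cone D`, and no generator can be removed. -/
theorem irredundant_V_representation (q : ℕ) (P : Set (Fin q → ℝ))
    (hPpoly : ∃ (m : ℕ) (M : Matrix (Fin m) (Fin q) ℝ) (b : Fin m → ℝ),
      P = {x | ∀ i, b i ≤ M.mulVec x i})
    (hPne : P.Nonempty)
    (hvert : ∃ p, IsVertexOf q P p)
    (V : Set (Fin q → ℝ)) (hV : V = {p | IsVertexOf q P p})
    (D : Finset (Fin q → ℝ))
    (hD : ∀ d ∈ D, IsExtremeDirOf q P d)
    (hDrep : ∀ d, IsExtremeDirOf q P d →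
      ∃! d' : Fin q → ℝ, d' ∈ D ∧ ∃ t : ℝ, 0 < t ∧ d = t • d') :
    P = convexHull ℝ V + conicalHull q (D : Set (Fin q → ℝ)) ∧
    (∀ v ∈ V,
      convexHull ℝ (V \ {v}) + conicalHull q (D : Set (Fin q → ℝ)) ≠ P) ∧
    (∀ d ∈ D,
      convexHull ℝ V + conicalHull q ((D : Set (Fin q → ℝ)) \ {d}) ≠ P) :=
  irredundant_V_representation_general q P hPpoly hvert V hV D hD hDrep
end
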